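/- arXiv:1606.09508 — 3 statements merged into one kernel-verified Lean document; each statement's English description precedes it below -/
import Mathlib

section
/- Let h₁, h₂ > 0 and let N_c ∈ ℝ^{8×3} be the VEM matrix of the rectangle with vertices (±h₁, ±h₂) and x̄ = 0. Then N_cᵀ N_c is invertible and tr((N_cᵀ N_c)⁻¹) = 1/(4h₁²) + 1/(4h₂²) + 1/(2(h₁² + h₂²)). -/
/-! The columns of `N_c` are pairwise orthogonal, so `N_cᵀ N_c` is diagonal with entries
`4h₁², 4h₂², 2(h₁² + h₂²)`, and its inverse is the diagonal matrix of their reciprocals. -/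

open Matrix

/-- The VEM matrix `N_c ∈ ℝ^{8×3}` of the rectangle with vertices `(±h₁, ±h₂)` and
node-average point `x̄ = 0`: for each vertex `r = x_i − x̄` it stacks the 2×3 block
`[[r₁, 0, r₂/√2], [0, r₂, r₁/√2]]`. -/
noncomputable def Nc (h1 h2 : ℝ) : Matrix (Fin 8) (Fin 3) ℝ :=
  !![h1, 0, h2 / Real.sqrt 2;
     0, h2, h1 / Real.sqrt 2;
     h1, 0, -h2 / Real.sqrt 2;
     0, -h2, h1 / Real.sqrt 2;
     -h1, 0, h2 / Real.sqrt 2;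
     0, h2, -h1 / Real.sqrt 2;
     -h1, 0, -h2 / Real.sqrt 2;
     0, -h2, -h1 / Real.sqrt 2]

section DiagonalInverse

variable {n K : Type*} [Fintype n] [DecidableEq n] [Field K] {d : n → K}

theorem Matrix.isUnit_diagonal_of_ne_zero (hd : ∀ i, d i ≠ 0) : IsUnit (diagonal d) :=
  isUnit_diagonal.mpr <| Pi.isUnit_iff.mpr fun i => (hd i).isUnit

theorem Matrix.trace_inv_diagonal_of_ne_zero (hd : ∀ i, d i ≠ 0) :
    (diagonal d)⁻¹.trace = ∑ i, (d i)⁻¹ := by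
  have hleft : diagonal d⁻¹ * diagonal d = 1 := by
    rw [diagonal_mul_diagonal, ← diagonal_one]
    exact congrArg diagonal (funext fun i => inv_mul_cancel₀ (hd i))
  rw [inv_eq_left_inv hleft, trace_diagonal, Pi.inv_def]

end DiagonalInverse

lemma NcT_mul_Nc (h1 h2 : ℝ) :
    (Nc h1 h2)ᵀ * Nc h1 h2 = diagonal ![4 * h1 ^ 2, 4 * h2 ^ 2, 2 * (h1 ^ 2 + h2 ^ 2)] := by
  ext i j
  fin_cases i <;> fin_cases j <;>
    simp [Nc, mul_apply, Fin.sum_univ_succ, div_mul_div_comm] <;> ring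

/-- For the rectangle `[−h₁,h₁]×[−h₂,h₂]`, the matrix `N_cᵀ N_c` is invertible and
`tr((N_cᵀ N_c)⁻¹) = 1/(4h₁²) + 1/(4h₂²) + 1/(2(h₁² + h₂²))`. -/
theorem trace_inv_NcT_mul_Nc (h1 h2 : ℝ) (hh1 : 0 < h1) (hh2 : 0 < h2) :
    IsUnit ((Nc h1 h2)ᵀ * Nc h1 h2) ∧
    ((Nc h1 h2)ᵀ * Nc h1 h2)⁻¹.trace =
      1 / (4 * h1 ^ 2) + 1 / (4 * h2 ^ 2) + 1 / (2 * (h1 ^ 2 + h2 ^ 2)) := by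
  have hd : ∀ i, ![4 * h1 ^ 2, 4 * h2 ^ 2, 2 * (h1 ^ 2 + h2 ^ 2)] i ≠ 0 := by
    intro i
    fin_cases i <;> simp <;> positivity
  rw [NcT_mul_Nc]
  refine ⟨isUnit_diagonal_of_ne_zero hd, ?_⟩
  simp [trace_inv_diagonal_of_ne_zero hd, Fin.sum_univ_three, one_div]
end

section
/- Let λ ≥ 0, μ > 0 and c > 0. Define for ε > 0 the functions α₁(ε) = (4/3)λ ε⁻¹ + (8/3)μ(ε + ε⁻¹), α₂(ε) = (4/3)λ ε + (8/3)μ(ε + ε⁻¹), and α_G(ε) = (2/3)·c/(ε + ε⁻¹). Then α₁(ε)/α_G(ε) → ∞ and α₂(ε)/α_G(ε) → ∞ both as ε → 0⁺ and as ε → ∞. In particular there is no constant k > 0, independent of ε, such that k·α_i(ε) ≤ α_G(ε) for all ε > 0 (i = 1, 2): the stabilization scaling α_G is not stable with respect to the aspect ratio. -/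
/-!
With `s(ε) = ε + ε⁻¹`, both `α₁` and `α₂` dominate `(8/3) μ s(ε)` (the `λ`-terms are
nonnegative), while `α_G = (2/3) c / s(ε)`. Hence `α_i / α_G ≥ (4μ/c) s(ε)²`, and `s` blows up
both as `ε → 0⁺` and as `ε → ∞`. A uniform bound `k α_i ≤ α_G` would cap the ratio by `1/k`.
-/

open Filter Topology

theorem tendsto_add_inv_nhdsGT_zero : Tendsto (fun x : ℝ => x + x⁻¹) (𝓝[>] 0) atTop := by
  refine tendsto_atTop_mono' _ ?_ tendsto_inv_nhdsGT_zero
  filter_upwards [self_mem_nhdsWithin] with x (hx : 0 < x)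
  exact le_add_of_nonneg_left hx.le

theorem tendsto_add_inv_atTop : Tendsto (fun x : ℝ => x + x⁻¹) atTop atTop := by
  refine tendsto_atTop_mono' _ ?_ tendsto_id
  filter_upwards [eventually_gt_atTop 0] with x (hx : 0 < x)
  exact le_add_of_nonneg_right (inv_nonneg.2 hx.le)

theorem tendsto_div_div_atTop_of_const_mul_le {α : Type*} {l : Filter α} {f s : α → ℝ}
    {m c : ℝ} (hm : 0 < m) (hc : 0 < c) (hs : Tendsto s l atTop)
    (hf : ∀ᶠ x in l, m * s x ≤ f x) : Tendsto (fun x => f x / (c / s x)) l atTop := by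
  have hsq : Tendsto (fun x => m / c * s x ^ 2) l atTop :=
    ((tendsto_pow_atTop two_ne_zero).comp hs).const_mul_atTop (div_pos hm hc)
  refine tendsto_atTop_mono' _ ?_ hsq
  filter_upwards [hf, hs.eventually_gt_atTop 0] with x hfx hsx
  calc m / c * s x ^ 2 = m * s x * s x / c := by ring
    _ ≤ f x * s x / c := by gcongr
    _ = f x / (c / s x) := (div_div_eq_mul_div _ _ _).symm

theorem not_eventually_const_mul_le_of_tendsto_div_atTop {α : Type*} {l : Filter α} [l.NeBot]
    {f g : α → ℝ} {k : ℝ} (hk : 0 < k) (hfg : Tendsto (fun x => f x / g x) l atTop)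
    (hg : ∀ᶠ x in l, 0 < g x) : ¬ ∀ᶠ x in l, k * f x ≤ g x := fun hle => by
  obtain ⟨x, ⟨hx, hgx⟩, hlex⟩ := (((hfg.eventually_gt_atTop k⁻¹).and hg).and hle).exists
  have : f x / g x ≤ k⁻¹ := by
    rw [div_le_iff₀ hgx, ← div_eq_inv_mul, le_div_iff₀ hk, mul_comm]
    exact hlex
  linarith

/-- Instability of the stabilization scaling `α_G` with respect to the aspect ratio: with
`α₁(ε) = (4/3)λ ε⁻¹ + (8/3)μ(ε + ε⁻¹)`, `α₂(ε) = (4/3)λ ε + (8/3)μ(ε + ε⁻¹)` and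
`α_G(ε) = (2/3)·c/(ε + ε⁻¹)` (`λ ≥ 0`, `μ > 0`, `c > 0`), the ratios `α₁/α_G` and `α₂/α_G`
tend to `∞` both as `ε → 0⁺` and as `ε → ∞`; in particular there is no `k > 0` independent
of `ε` with `k·α_i(ε) ≤ α_G(ε)` for all `ε > 0`. -/
theorem alphaG_unstable (lam mu c : ℝ) (hlam : 0 ≤ lam) (hmu : 0 < mu) (hc : 0 < c) :
    let a1 : ℝ → ℝ := fun e => (4 / 3) * lam * e⁻¹ + (8 / 3) * mu * (e + e⁻¹)
    let a2 : ℝ → ℝ := fun e => (4 / 3) * lam * e + (8 / 3) * mu * (e + e⁻¹)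
    let aG : ℝ → ℝ := fun e => (2 / 3) * c / (e + e⁻¹)
    Tendsto (fun e => a1 e / aG e) (𝓝[>] (0 : ℝ)) atTop ∧
    Tendsto (fun e => a1 e / aG e) atTop atTop ∧
    Tendsto (fun e => a2 e / aG e) (𝓝[>] (0 : ℝ)) atTop ∧
    Tendsto (fun e => a2 e / aG e) atTop atTop ∧
    ¬ ∃ k > (0 : ℝ), ∀ e > (0 : ℝ), k * a1 e ≤ aG e ∧ k * a2 e ≤ aG e := by
  intro a1 a2 aG
  have ratios : ∀ {l : Filter ℝ}, (∀ᶠ e in l, 0 < e) → Tendsto (fun e => e + e⁻¹) l atTop →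
      Tendsto (fun e => a1 e / aG e) l atTop ∧ Tendsto (fun e => a2 e / aG e) l atTop :=
    fun hpos hs =>
      ⟨tendsto_div_div_atTop_of_const_mul_le (by positivity) (by positivity) hs <|
          hpos.mono fun e he => le_add_of_nonneg_left (by positivity),
        tendsto_div_div_atTop_of_const_mul_le (by positivity) (by positivity) hs <|
          hpos.mono fun e he => le_add_of_nonneg_left (by positivity)⟩
  obtain ⟨h1zero, h2zero⟩ := ratios self_mem_nhdsWithin tendsto_add_inv_nhdsGT_zero
  obtain ⟨h1top, h2top⟩ := ratios (eventually_gt_atTop 0) tendsto_add_inv_atTop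
  refine ⟨h1zero, h1top, h2zero, h2top, fun ⟨k, hk, hbound⟩ => ?_⟩
  have hpos : ∀ᶠ e : ℝ in atTop, 0 < e := eventually_gt_atTop 0
  exact not_eventually_const_mul_le_of_tendsto_div_atTop hk h1top
    (hpos.mono fun e he => by positivity) (hpos.mono fun e he => (hbound e he).1)
end

section
/- Let λ ≥ 0 and μ > 0. Define for ε > 0 the functions α₁(ε) = (4/3)λ ε⁻¹ + (8/3)μ(ε + ε⁻¹), α₂(ε) = (4/3)λ ε + (8/3)μ(ε + ε⁻¹), and α_N(ε) = ((2λ + 6μ)/4)·(ε + ε⁻¹ + 2/(ε + ε⁻¹)). Then there exist constants c₁, c₂ > 0, depending only on λ and μ and independent of ε, such that c₁·α_N(ε) ≤ α_i(ε) ≤ c₂·α_N(ε) for all ε > 0 and i = 1, 2: the alternative stabilization scaling α_N is stable with respect to the aspect ratio. -/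
/-- Stability of the alternative stabilization scaling `α_N` with respect to the aspect
ratio: with `α₁(ε) = (4/3)λ ε⁻¹ + (8/3)μ(ε + ε⁻¹)`, `α₂(ε) = (4/3)λ ε + (8/3)μ(ε + ε⁻¹)`
and `α_N(ε) = ((2λ + 6μ)/4)·(ε + ε⁻¹ + 2/(ε + ε⁻¹))` (`λ ≥ 0`, `μ > 0`), there exist
constants `c₁, c₂ > 0` independent of `ε` with `c₁·α_N(ε) ≤ α_i(ε) ≤ c₂·α_N(ε)` for all
`ε > 0` and `i = 1, 2`. -/
theorem alphaN_stable (lam mu : ℝ) (hlam : 0 ≤ lam) (hmu : 0 < mu) :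
    let a1 : ℝ → ℝ := fun e => (4 / 3) * lam * e⁻¹ + (8 / 3) * mu * (e + e⁻¹)
    let a2 : ℝ → ℝ := fun e => (4 / 3) * lam * e + (8 / 3) * mu * (e + e⁻¹)
    let aN : ℝ → ℝ := fun e => ((2 * lam + 6 * mu) / 4) * (e + e⁻¹ + 2 / (e + e⁻¹))
    ∃ c1 > (0 : ℝ), ∃ c2 > (0 : ℝ), ∀ e > (0 : ℝ),
      (c1 * aN e ≤ a1 e ∧ a1 e ≤ c2 * aN e) ∧
      (c1 * aN e ≤ a2 e ∧ a2 e ≤ c2 * aN e) := by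
  intro a1 a2 aN
  have hD : (0:ℝ) < 2 * lam + 6 * mu := by linarith
  refine ⟨16 * mu / (3 * (2 * lam + 6 * mu)), by positivity, 8/3, by norm_num, ?_⟩
  intro e he
  have hie : 0 < e⁻¹ := inv_pos.2 he
  have hprod : e * e⁻¹ = 1 := mul_inv_cancel₀ he.ne'
  set s := e + e⁻¹ with hs
  have hs0 : 0 < s := by positivity
  have hs2 : 2 ≤ s := by rw [hs]; nlinarith [sq_nonneg (e - 1)]
  clear_value s
  have ht0 : 0 ≤ 2 / s := by positivity
  have ht1 : 2 / s ≤ 1 := by rw [div_le_one hs0]; linarith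
  have hA : 16 * mu / (3 * (2 * lam + 6 * mu)) * aN e = 4 * mu / 3 * (s + 2 / s) := by
    simp only [aN, ← hs]
    field_simp
    ring
  have hB : (8/3 : ℝ) * aN e = 2 * (2 * lam + 6 * mu) / 3 * (s + 2 / s) := by
    simp only [aN, ← hs]
    ring
  simp only [a1, a2, ← hs]
  have h2s : s + 2 / s ≤ 2 * s := by linarith
  have low : 4 * mu / 3 * (s + 2 / s) ≤ 8 / 3 * mu * s := by
    nlinarith [mul_le_mul_of_nonneg_left h2s (by positivity : (0:ℝ) ≤ 4 * mu / 3)]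
  have high : 2 * (2 * lam + 6 * mu) / 3 * s ≤ 2 * (2 * lam + 6 * mu) / 3 * (s + 2 / s) :=
    mul_le_mul_of_nonneg_left (by linarith) (by positivity)
  have hse : lam * s = lam * e + lam * e⁻¹ := by rw [hs]; ring
  have hms : 0 ≤ mu * s := by positivity
  refine ⟨⟨?_, ?_⟩, ?_, ?_⟩
  · rw [hA]; nlinarith [mul_nonneg hlam hie.le]
  · rw [hB]; nlinarith [mul_nonneg hlam he.le]
  · rw [hA]; nlinarith [mul_nonneg hlam he.le]
  · rw [hB]; nlinarith [mul_nonneg hlam hie.le]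
end
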